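/- Let Λ = ℤ^d, let Γ act on Λ by automorphisms, and let G = Λ ⋊ Γ. For every unitary character ξ of Λ whose Γ-orbit has order exactly n, there exists an irreducible unitary representation σ : G → U(n) whose set Σ_σ of occurring characters of Λ is exactly the Γ-orbit of ξ; indeed, the representation induced to G from the one-dimensional representation (a,γ) ↦ ξ(a) of the index-n subgroup Λ ⋊ Γ_ξ (taking η to be the trivial character of Γ_ξ) has this property. -/

import Mathlib

/-!
STATEMENT 11: For every character ξ of Λ = ℤ^d whose Γ-orbit has order exactly n, there is an
irreducible unitary representation σ : G = Λ ⋊ Γ → U(n) whose set Σ_σ of occurring characters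
is exactly the Γ-orbit of ξ; indeed the representation induced from the one-dimensional
representation (a,γ) ↦ ξ(a) of the index-n subgroup Λ ⋊ Γ_ξ (η trivial) has this property.
-/

noncomputable section

open scoped TensorProduct

namespace Statement11

/-- The lattice Λ = ℤ^d, written multiplicatively. -/
abbrev Lat (d : ℕ) := Multiplicative (Fin d → ℤ)

/-- Unitary characters of Λ. -/
abbrev CharT (d : ℕ) := Lat d →* Circle

variable {d : ℕ} {Γ : Type*} [Group Γ]

/-- The action of Γ on unitary characters: (γ·ξ)(a) = ξ(ρ_*(γ)⁻¹ a). -/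
def cact (φ : Γ →* MulAut (Lat d)) (γ : Γ) (ξ : CharT d) : CharT d :=
  ξ.comp (φ γ⁻¹).toMonoidHom

lemma cact_one (φ : Γ →* MulAut (Lat d)) (ξ : CharT d) : cact φ 1 ξ = ξ := by
  ext a; simp [cact]

lemma cact_mul (φ : Γ →* MulAut (Lat d)) (γ δ : Γ) (ξ : CharT d) :
    cact φ (γ * δ) ξ = cact φ γ (cact φ δ ξ) := by
  ext a; simp [cact, mul_inv_rev, map_mul]

/-- The isotropy (stabilizer) subgroup Γ_ξ = {γ ∈ Γ : γ·ξ = ξ}. -/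
def stab (φ : Γ →* MulAut (Lat d)) (ξ : CharT d) : Subgroup Γ where
  carrier := {γ | cact φ γ ξ = ξ}
  one_mem' := cact_one φ ξ
  mul_mem' := by
    intro a b ha hb
    simp only [Set.mem_setOf_eq] at ha hb ⊢
    rw [cact_mul, hb, ha]
  inv_mem' := by
    intro a ha
    simp only [Set.mem_setOf_eq] at ha ⊢
    have h : cact φ (a⁻¹ * a) ξ = ξ := by rw [inv_mul_cancel, cact_one]
    rwa [cact_mul, ha] at h

variable {n : ℕ}

/-- A unitary representation is irreducible if the only invariant subspaces are 0 and ℂⁿ. -/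
def IsIrred {H : Type*} [Group H] {k : ℕ} (σ : H →* Matrix.unitaryGroup (Fin k) ℂ) : Prop :=
  ∀ W : Submodule ℂ (Fin k → ℂ),
    (∀ g : H, ∀ v ∈ W, Matrix.mulVec (σ g : Matrix (Fin k) (Fin k) ℂ) v ∈ W) →
      W = ⊥ ∨ W = ⊤

/-- The ξ-eigenspace V_ξ = {v ∈ ℂⁿ : σ(a,1) v = ξ(a) v for all a ∈ Λ}. -/
def eig (φ : Γ →* MulAut (Lat d)) (σ : (Lat d ⋊[φ] Γ) →* Matrix.unitaryGroup (Fin n) ℂ)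
    (ξ : CharT d) : Submodule ℂ (Fin n → ℂ) :=
  ⨅ a : Lat d,
    Module.End.eigenspace
      (Matrix.mulVecLin (σ (SemidirectProduct.inl a) : Matrix (Fin n) (Fin n) ℂ)) (ξ a : ℂ)

/-- The set Σ_σ of characters of Λ occurring in σ. -/
def spec (φ : Γ →* MulAut (Lat d)) (σ : (Lat d ⋊[φ] Γ) →* Matrix.unitaryGroup (Fin n) ℂ) :
    Set (CharT d) :=
  {ξ | eig φ σ ξ ≠ ⊥}

/-- ℂ[G] ⊗_ℂ ℂ, as a ℂ[G]-module via the left factor. -/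
abbrev TT1 (φ : Γ →* MulAut (Lat d)) := MonoidAlgebra ℂ (Lat d ⋊[φ] Γ) ⊗[ℂ] ℂ

/-- The ℂ[G]-submodule of balancing relations g·h ⊗ c - g ⊗ h·c, for
h = (a,γ) ∈ H = Λ ⋊ Γ_ξ acting on ℂ by the one-dimensional representation
(a,γ) ↦ ξ(a)·η(γ). -/
def rel1 (φ : Γ →* MulAut (Lat d)) (ξ : CharT d) (η : ↥(stab φ ξ) →* Circle) :
    Submodule (MonoidAlgebra ℂ (Lat d ⋊[φ] Γ)) (TT1 φ) :=
  Submodule.span (MonoidAlgebra ℂ (Lat d ⋊[φ] Γ))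
    {x | ∃ (g : Lat d ⋊[φ] Γ) (a : Lat d) (γ : Γ) (hγ : γ ∈ stab φ ξ) (c : ℂ),
      x = MonoidAlgebra.single (g * (⟨a, γ⟩ : Lat d ⋊[φ] Γ)) (1 : ℂ) ⊗ₜ[ℂ] c
          - MonoidAlgebra.single g (1 : ℂ) ⊗ₜ[ℂ] ((ξ a : ℂ) * (η ⟨γ, hγ⟩ : ℂ) * c)}

/-- The induced module ℂ[G] ⊗_{ℂ[H]} ℂ. -/
abbrev Ind1 (φ : Γ →* MulAut (Lat d)) (ξ : CharT d) (η : ↥(stab φ ξ) →* Circle) :=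
  TT1 φ ⧸ rel1 φ ξ η


/-!
Index the orbit of `ξ` by `ι` through an equivariant bijection `χ`, and let
`σ(a, γ) e_i = χ_{γ i}(a) e_{γ i}`, a diagonal matrix of characters times a permutation matrix.
Since the `χ_i` are pairwise distinct, the `Λ`-eigenspaces are the coordinate lines, so `Σ_σ` is
the orbit, and polynomials in the diagonal operators cut any invariant subspace into coordinate
lines; `Γ` permutes these transitively, so `σ` is irreducible. Finally `e_i ↦ (1, γ_i) ⊗ 1`, with
`γ_i • i₀ = i`, is an isomorphism onto the induced module, with inverse `y ⊗ c ↦ c • σ(y) e_{i₀}`.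
-/

open Matrix MulAction

section Multipliers

variable {K ι : Type*} [Field K] [Fintype ι] [DecidableEq ι]

def multipliers (W : Submodule K (ι → K)) : Subalgebra K (ι → K) where
  carrier := {f | ∀ w ∈ W, f * w ∈ W}
  mul_mem' hf hg w hw := by simpa only [mul_assoc] using hf _ (hg w hw)
  add_mem' hf hg w hw := by simpa only [add_mul] using W.add_mem (hf w hw) (hg w hw)
  algebraMap_mem' c w hw := by
    simpa only [Algebra.algebraMap_eq_smul_one, smul_mul_assoc, one_mul] using W.smul_mem c hw

/-- Multiplying the functions `f_j - f_j(j)`, where `f_j` separates `j` from `i`, gives a multiple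
of the indicator of `i`. -/
lemma single_one_mem_of_separates (S : Subalgebra K (ι → K))
    (hS : ∀ i j, i ≠ j → ∃ f ∈ S, f i ≠ f j) (i : ι) : Pi.single i 1 ∈ S := by
  choose f hfS hf using hS i
  let g : ι → ι → K := fun j => if h : i = j then 1 else f j h - algebraMap K _ (f j h j)
  have hgS : ∀ j, g j ∈ S := fun j => by
    unfold g; split_ifs
    exacts [S.one_mem, S.sub_mem (hfS _ _) (S.algebraMap_mem _)]
  have hgi : ∏ j, g j i ≠ 0 := Finset.prod_ne_zero_iff.2 fun j _ => by
    unfold g; split_ifs with h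
    exacts [one_ne_zero, sub_ne_zero.2 (hf j h)]
  have hprod : Pi.single i 1 = (∏ j, g j i)⁻¹ • ∏ j, g j := by
    ext k
    rcases eq_or_ne k i with rfl | hk
    · simp [Finset.prod_apply, hgi]
    · have : ∏ j, g j k = 0 := Finset.prod_eq_zero (Finset.mem_univ k) (by simp [g, hk.symm])
      simp [Finset.prod_apply, hk, this]
  rw [hprod]
  exact S.smul_mem (S.prod_mem fun j _ => hgS j) _

lemma single_mem_of_multipliers_separate {W : Submodule K (ι → K)}
    (hW : ∀ i j, i ≠ j → ∃ f ∈ multipliers W, f i ≠ f j) {w : ι → K} (hw : w ∈ W) (i : ι) :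
    Pi.single i (w i) ∈ W := by
  simpa [← Pi.single_mul_left] using single_one_mem_of_separates (multipliers W) hW i w hw

end Multipliers

section Monomial

variable {ι : Type*} [Fintype ι] [DecidableEq ι]

lemma diagonal_circle_mem_unitaryGroup (c : ι → Circle) :
    diagonal (fun i => (c i : ℂ)) ∈ unitaryGroup ι ℂ := by
  rw [mem_unitaryGroup_iff, star_eq_conjTranspose, diagonal_conjTranspose, diagonal_mul_diagonal]
  simp [Complex.mul_conj]

lemma permMatrix_mem_unitaryGroup (τ : Equiv.Perm ι) : τ.permMatrix ℂ ∈ unitaryGroup ι ℂ := by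
  rw [mem_unitaryGroup_iff, star_eq_conjTranspose, conjTranspose_permMatrix, ← permMatrix_mul,
    inv_mul_cancel, permMatrix_one]

def diagonalUnitary : (ι → Circle) →* unitaryGroup ι ℂ :=
  MonoidHom.mk' (fun c => ⟨diagonal fun i => (c i : ℂ), diagonal_circle_mem_unitaryGroup c⟩)
    fun c c' => Subtype.ext <| by simp [diagonal_mul_diagonal]

def permUnitary : Equiv.Perm ι →* unitaryGroup ι ℂ :=
  MonoidHom.mk' (fun τ => ⟨τ⁻¹.permMatrix ℂ, permMatrix_mem_unitaryGroup τ⁻¹⟩)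
    fun τ τ' => Subtype.ext <| by simp

lemma diagonalUnitary_mulVec (c : ι → Circle) (v : ι → ℂ) :
    (diagonalUnitary c : Matrix ι ι ℂ) *ᵥ v = fun i => (c i : ℂ) * v i :=
  funext (mulVec_diagonal _ v)

lemma permUnitary_mulVec (τ : Equiv.Perm ι) (v : ι → ℂ) :
    (permUnitary τ : Matrix ι ι ℂ) *ᵥ v = v ∘ ⇑τ⁻¹ :=
  permMatrix_mulVec τ⁻¹

variable [MulAction Γ ι] (φ : Γ →* MulAut (Lat d)) {χ : ι → CharT d}

lemma diagonalUnitary_mul_permUnitary (hχ : ∀ (γ : Γ) (i : ι), χ (γ • i) = cact φ γ (χ i))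
    (γ : Γ) (a : Lat d) :
    diagonalUnitary (MonoidHom.pi χ (φ γ a)) * permUnitary (toPerm γ) =
      permUnitary (toPerm γ) * diagonalUnitary (MonoidHom.pi χ a) := by
  refine Subtype.ext (ext_of_mulVec_single fun j => funext fun k => ?_)
  simp only [Submonoid.coe_mul, ← mulVec_mulVec, diagonalUnitary_mulVec, permUnitary_mulVec]
  simp [hχ, cact]

def monomialRep (hχ : ∀ (γ : Γ) (i : ι), χ (γ • i) = cact φ γ (χ i)) :
    (Lat d ⋊[φ] Γ) →* unitaryGroup ι ℂ :=
  SemidirectProduct.lift (diagonalUnitary.comp (MonoidHom.pi χ))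
    (permUnitary.comp (toPermHom Γ ι)) fun γ => MonoidHom.ext fun a => by
      simp [MulAut.conj_apply, ← diagonalUnitary_mul_permUnitary φ hχ]

variable {φ} (hχ : ∀ (γ : Γ) (i : ι), χ (γ • i) = cact φ γ (χ i))

lemma monomialRep_mulVec (g : Lat d ⋊[φ] Γ) (v : ι → ℂ) :
    (monomialRep φ hχ g : Matrix ι ι ℂ) *ᵥ v = fun i => (χ i g.left : ℂ) * v (g.right⁻¹ • i) := by
  change ((diagonalUnitary _ * permUnitary _ : unitaryGroup ι ℂ) : Matrix ι ι ℂ) *ᵥ v = _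
  simp only [Submonoid.coe_mul, ← mulVec_mulVec, diagonalUnitary_mulVec, permUnitary_mulVec]
  rfl

lemma monomialRep_mulVec_single (g : Lat d ⋊[φ] Γ) (i : ι) :
    (monomialRep φ hχ g : Matrix ι ι ℂ) *ᵥ Pi.single i 1 =
      (χ (g.right • i) g.left : ℂ) • Pi.single (g.right • i) 1 := by
  ext k
  rw [monomialRep_mulVec]
  rcases eq_or_ne k (g.right • i) with rfl | hk
  · simp
  · simp [hk, inv_smul_eq_iff]

end Monomial

section Spectrum

variable [MulAction Γ (Fin n)] {φ : Γ →* MulAut (Lat d)} {χ : Fin n → CharT d}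
  (hχ : ∀ (γ : Γ) (i : Fin n), χ (γ • i) = cact φ γ (χ i))

lemma mem_eig_monomialRep_iff (η : CharT d) (v : Fin n → ℂ) :
    v ∈ eig φ (monomialRep φ hχ) η ↔ ∀ a i, (χ i a : ℂ) * v i = η a * v i := by
  simp only [eig, Submodule.mem_iInf, Module.End.mem_eigenspace_iff, mulVecLin_apply,
    monomialRep_mulVec, funext_iff]
  simp

lemma spec_monomialRep : spec φ (monomialRep φ hχ) = Set.range χ := by
  ext η
  simp only [spec, Set.mem_ofPred_eq, Submodule.ne_bot_iff, mem_eig_monomialRep_iff]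
  constructor
  · rintro ⟨v, hv, hv0⟩
    obtain ⟨i, hi⟩ := Function.ne_iff.1 hv0
    exact ⟨i, MonoidHom.ext fun a => Circle.coe_injective (mul_right_cancel₀ hi (hv a i))⟩
  · rintro ⟨i, rfl⟩
    refine ⟨Pi.single i 1, fun a k => ?_, by simp⟩
    rcases eq_or_ne k i with rfl | hk
    · rfl
    · simp [hk]

lemma isIrred_monomialRep [IsPretransitive Γ (Fin n)] (hinj : Function.Injective χ) :
    IsIrred (monomialRep φ hχ) := by
  intro W hW
  refine or_iff_not_imp_left.2 fun hbot => ?_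
  obtain ⟨w, hw, hw0⟩ := (Submodule.ne_bot_iff W).1 hbot
  obtain ⟨i, hi⟩ := Function.ne_iff.1 hw0
  have hsep : ∀ k l, k ≠ l → ∃ f ∈ multipliers W, f k ≠ f l := fun k l hkl => by
    obtain ⟨a, ha⟩ := DFunLike.ne_iff.1 (hinj.ne hkl)
    refine ⟨fun j => (χ j a : ℂ), fun v hv => ?_, Circle.coe_injective.ne ha⟩
    simpa [monomialRep_mulVec, Pi.mul_def] using hW (SemidirectProduct.inl a) v hv
  have hi : Pi.single i 1 ∈ W := by
    have := W.smul_mem (w i)⁻¹ (single_mem_of_multipliers_separate hsep hw i)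
    rwa [← Pi.single_smul, smul_eq_mul, inv_mul_cancel₀ hi] at this
  have hsingle : ∀ j, Pi.single j 1 ∈ W := fun j => by
    obtain ⟨γ, rfl⟩ := exists_smul_eq Γ i j
    have := hW (SemidirectProduct.inr γ) _ hi
    rwa [monomialRep_mulVec_single, SemidirectProduct.left_inr, map_one, Circle.coe_one,
      one_smul] at this
  rw [eq_top_iff, ← (Pi.basisFun ℂ (Fin n)).span_eq, Submodule.span_le]
  rintro _ ⟨j, rfl⟩
  simpa using hsingle j

end Spectrum

section TensorEval

variable {ι G : Type*} [Fintype ι] [DecidableEq ι] [Monoid G] (σ : G →* unitaryGroup ι ℂ)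

def toRepresentation : Representation ℂ G (ι → ℂ) :=
  (Units.coeHom _).comp (UnitaryGroup.embeddingGL.comp σ)

lemma toRepresentation_apply (g : G) (v : ι → ℂ) :
    toRepresentation σ g v = (σ g : Matrix ι ι ℂ) *ᵥ v :=
  rfl

variable (v₀ : ι → ℂ)

def tensorEval : MonoidAlgebra ℂ G ⊗[ℂ] ℂ →ₗ[ℂ] (ι → ℂ) :=
  LinearMap.applyₗ v₀ ∘ₗ (toRepresentation σ).asAlgebraHom.toLinearMap ∘ₗ
    (TensorProduct.rid ℂ _).toLinearMap

lemma tensorEval_single_tmul (g : G) (c : ℂ) :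
    tensorEval σ v₀ (MonoidAlgebra.single g 1 ⊗ₜ c) = c • (σ g : Matrix ι ι ℂ) *ᵥ v₀ := by
  simp [tensorEval, toRepresentation_apply]

lemma tensorEval_smul (r : MonoidAlgebra ℂ G) (x : MonoidAlgebra ℂ G ⊗[ℂ] ℂ) :
    tensorEval σ v₀ (r • x) = (toRepresentation σ).asAlgebraHom r (tensorEval σ v₀ x) := by
  induction x using TensorProduct.induction_on with
  | zero => simp
  | tmul y c => simp [tensorEval, TensorProduct.smul_tmul']
  | add x y hx hy => rw [smul_add, map_add, map_add, hx, hy, map_add]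

end TensorEval

section Stabilizer

variable {ι : Type*} [MulAction Γ ι] {φ : Γ →* MulAut (Lat d)} {χ : ι → CharT d} {ξ : CharT d}
  {i₀ : ι}

lemma mem_stab_of_smul_eq_self (hχ : ∀ (γ : Γ) (i : ι), χ (γ • i) = cact φ γ (χ i))
    (hi₀ : χ i₀ = ξ) {γ : Γ} (hγ : γ • i₀ = i₀) : γ ∈ stab φ ξ := by
  change cact φ γ ξ = ξ
  rw [← hi₀, ← hχ, hγ]

lemma smul_eq_self_of_mem_stab (hχ : ∀ (γ : Γ) (i : ι), χ (γ • i) = cact φ γ (χ i))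
    (hinj : Function.Injective χ) (hi₀ : χ i₀ = ξ) {γ : Γ} (hγ : γ ∈ stab φ ξ) : γ • i₀ = i₀ :=
  hinj (by rw [hχ, hi₀]; exact hγ)

lemma mk_single_tmul_eq (hχ : ∀ (γ : Γ) (i : ι), χ (γ • i) = cact φ γ (χ i))
    (hi₀ : χ i₀ = ξ) (a : Lat d) {γ γ' : Γ} (h : γ' • i₀ = γ • i₀) :
    (Submodule.Quotient.mk (MonoidAlgebra.single ⟨a, γ⟩ (1 : ℂ) ⊗ₜ[ℂ] (1 : ℂ)) : Ind1 φ ξ 1) =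
      (χ (γ • i₀) a : ℂ) •
        Submodule.Quotient.mk (MonoidAlgebra.single ⟨1, γ'⟩ (1 : ℂ) ⊗ₜ[ℂ] (1 : ℂ)) := by
  have hs : γ'⁻¹ * γ ∈ stab φ ξ :=
    mem_stab_of_smul_eq_self hχ hi₀ (by rw [mul_smul, ← h, inv_smul_smul])
  have hprod : (⟨1, γ'⟩ * ⟨φ γ'⁻¹ a, γ'⁻¹ * γ⟩ : Lat d ⋊[φ] Γ) = ⟨a, γ⟩ := by
    ext
    · simp [map_inv]
    · simp
  have hχa : (χ (γ • i₀) a : ℂ) = (ξ (φ γ'⁻¹ a) : ℂ) := by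
    rw [← h, hχ, hi₀]
    rfl
  rw [hχa, ← Submodule.Quotient.mk_smul, ← TensorProduct.tmul_smul, Submodule.Quotient.eq,
    ← hprod]
  refine Submodule.subset_span ⟨⟨1, γ'⟩, φ γ'⁻¹ a, γ'⁻¹ * γ, hs, 1, ?_⟩
  simp

end Stabilizer

section Induced

variable {ι : Type*} [Fintype ι] [DecidableEq ι] [MulAction Γ ι] {φ : Γ →* MulAut (Lat d)}
  {χ : ι → CharT d} (hχ : ∀ (γ : Γ) (i : ι), χ (γ • i) = cact φ γ (χ i)) {ξ : CharT d} {i₀ : ι}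

lemma tensorEval_rel1 (hinj : Function.Injective χ) (hi₀ : χ i₀ = ξ) {x : TT1 φ}
    (hx : x ∈ rel1 φ ξ 1) : tensorEval (monomialRep φ hχ) (Pi.single i₀ 1) x = 0 := by
  induction hx using Submodule.span_induction with
  | mem x hx =>
    obtain ⟨g, a, γ, hγ, c, rfl⟩ := hx
    have hfix : (monomialRep φ hχ ⟨a, γ⟩ : Matrix ι ι ℂ) *ᵥ Pi.single i₀ 1 =
        (ξ a : ℂ) • Pi.single i₀ 1 := by
      rw [monomialRep_mulVec_single, smul_eq_self_of_mem_stab hχ hinj hi₀ hγ, hi₀]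
    rw [map_sub, tensorEval_single_tmul, tensorEval_single_tmul, map_mul, Submonoid.coe_mul,
      ← mulVec_mulVec, hfix, mulVec_smul, smul_smul, sub_eq_zero]
    simp [mul_comm]
  | zero => exact map_zero _
  | add x y _ _ hx hy => rw [map_add, hx, hy, add_zero]
  | smul r x _ hx => rw [tensorEval_smul, hx, map_zero]

def inducedToMonomial (hinj : Function.Injective χ) (hi₀ : χ i₀ = ξ) :
    Ind1 φ ξ 1 →ₗ[ℂ] (ι → ℂ) :=
  ((rel1 φ ξ 1).restrictScalars ℂ).liftQ (tensorEval (monomialRep φ hχ) (Pi.single i₀ 1))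
      (fun _ hx => tensorEval_rel1 hχ hinj hi₀ hx) ∘ₗ
    (Submodule.Quotient.restrictScalarsEquiv ℂ (rel1 φ ξ 1)).symm.toLinearMap

lemma inducedToMonomial_mk (hinj : Function.Injective χ) (hi₀ : χ i₀ = ξ) (x : TT1 φ) :
    inducedToMonomial hχ hinj hi₀ (Submodule.Quotient.mk x) =
      tensorEval (monomialRep φ hχ) (Pi.single i₀ 1) x :=
  rfl

lemma inducedToMonomial_single_smul (hinj : Function.Injective χ) (hi₀ : χ i₀ = ξ)
    (g : Lat d ⋊[φ] Γ) (z : Ind1 φ ξ 1) :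
    inducedToMonomial hχ hinj hi₀ (MonoidAlgebra.single g (1 : ℂ) • z) =
      (monomialRep φ hχ g : Matrix ι ι ℂ) *ᵥ inducedToMonomial hχ hinj hi₀ z := by
  obtain ⟨x, rfl⟩ := Submodule.Quotient.mk_surjective _ z
  rw [← Submodule.Quotient.mk_smul, inducedToMonomial_mk, inducedToMonomial_mk, tensorEval_smul,
    Representation.asAlgebraHom_single, one_smul, toRepresentation_apply]

variable (i₀) in
def monomialToInduced [IsPretransitive Γ ι] : (ι → ℂ) →ₗ[ℂ] Ind1 φ ξ 1 :=
  (Pi.basisFun ℂ ι).constr ℂ fun i => Submodule.Quotient.mk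
    (MonoidAlgebra.single ⟨1, (exists_smul_eq Γ i₀ i).choose⟩ (1 : ℂ) ⊗ₜ[ℂ] (1 : ℂ))

lemma monomialToInduced_single [IsPretransitive Γ ι] (i : ι) :
    (monomialToInduced i₀ (Pi.single i 1) : Ind1 φ ξ 1) = Submodule.Quotient.mk
      (MonoidAlgebra.single ⟨1, (exists_smul_eq Γ i₀ i).choose⟩ (1 : ℂ) ⊗ₜ[ℂ] (1 : ℂ)) := by
  rw [← Pi.basisFun_apply, monomialToInduced, Module.Basis.constr_basis]

lemma inducedToMonomial_comp_monomialToInduced [IsPretransitive Γ ι]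
    (hinj : Function.Injective χ) (hi₀ : χ i₀ = ξ) :
    inducedToMonomial hχ hinj hi₀ ∘ₗ monomialToInduced i₀ = LinearMap.id := by
  refine (Pi.basisFun ℂ ι).ext fun i => ?_
  rw [LinearMap.comp_apply, Pi.basisFun_apply, monomialToInduced_single, inducedToMonomial_mk,
    tensorEval_single_tmul, monomialRep_mulVec_single, (exists_smul_eq Γ i₀ i).choose_spec]
  simp

lemma monomialToInduced_comp_tensorEval [IsPretransitive Γ ι] (hi₀ : χ i₀ = ξ) :
    monomialToInduced i₀ ∘ₗ tensorEval (monomialRep φ hχ) (Pi.single i₀ 1) =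
      ((rel1 φ ξ 1).mkQ.restrictScalars ℂ) := by
  ext ⟨a, γ⟩
  change monomialToInduced i₀ (tensorEval _ _ (MonoidAlgebra.single _ _ ⊗ₜ 1)) =
    Submodule.Quotient.mk (MonoidAlgebra.single _ _ ⊗ₜ 1)
  rw [tensorEval_single_tmul, monomialRep_mulVec_single, one_smul, map_smul,
    monomialToInduced_single, mk_single_tmul_eq hχ hi₀ a (exists_smul_eq Γ i₀ _).choose_spec]

lemma monomialToInduced_comp_inducedToMonomial [IsPretransitive Γ ι]
    (hinj : Function.Injective χ) (hi₀ : χ i₀ = ξ) :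
    monomialToInduced i₀ ∘ₗ inducedToMonomial hχ hinj hi₀ = LinearMap.id := by
  refine LinearMap.ext fun z => ?_
  obtain ⟨x, rfl⟩ := Submodule.Quotient.mk_surjective _ z
  exact LinearMap.congr_fun (monomialToInduced_comp_tensorEval hχ hi₀) x

def monomialEquivInduced [IsPretransitive Γ ι] (hinj : Function.Injective χ) (hi₀ : χ i₀ = ξ) :
    (ι → ℂ) ≃ₗ[ℂ] Ind1 φ ξ 1 :=
  .ofLinearMap _ _ (monomialToInduced_comp_inducedToMonomial hχ hinj hi₀)
    (inducedToMonomial_comp_monomialToInduced hχ hinj hi₀)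

lemma monomialEquivInduced_mulVec [IsPretransitive Γ ι] (hinj : Function.Injective χ)
    (hi₀ : χ i₀ = ξ) (g : Lat d ⋊[φ] Γ) (v : ι → ℂ) :
    monomialEquivInduced hχ hinj hi₀ ((monomialRep φ hχ g : Matrix ι ι ℂ) *ᵥ v) =
      (MonoidAlgebra.single g (1 : ℂ) : MonoidAlgebra ℂ (Lat d ⋊[φ] Γ)) •
        monomialEquivInduced hχ hinj hi₀ v := by
  refine (monomialEquivInduced hχ hinj hi₀).symm.injective ?_
  change _ = inducedToMonomial hχ hinj hi₀ _
  rw [LinearEquiv.symm_apply_apply, inducedToMonomial_single_smul]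
  exact congrArg _ ((monomialEquivInduced hχ hinj hi₀).symm_apply_apply v).symm

end Induced

/-- `cact` as an action; it is not an instance since it depends on `φ`. -/
abbrev charAction (φ : Γ →* MulAut (Lat d)) : MulAction Γ (CharT d) where
  smul := cact φ
  one_smul := cact_one φ
  mul_smul := cact_mul φ

lemma exists_fin_equivariant_of_orbit (φ : Γ →* MulAut (Lat d)) (ξ : CharT d)
    (horb : (Set.range (fun γ : Γ => cact φ γ ξ)).Finite)
    (hn : Nat.card ↥(Set.range (fun γ : Γ => cact φ γ ξ)) = n) :
    ∃ (_ : MulAction Γ (Fin n)) (χ : Fin n → CharT d),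
      (∀ (γ : Γ) (i : Fin n), χ (γ • i) = cact φ γ (χ i)) ∧ Function.Injective χ ∧
        IsPretransitive Γ (Fin n) ∧ Set.range χ = Set.range (fun γ : Γ => cact φ γ ξ) := by
  let instChar := charAction φ
  have : Fintype (orbit Γ ξ) := horb.fintype
  have hcard : Fintype.card (orbit Γ ξ) = n := by
    rw [← Nat.card_eq_fintype_card]
    exact hn
  let ob : Fin n ≃ orbit Γ ξ := (Fintype.equivFinOfCardEq hcard).symm
  let instFin : MulAction Γ (Fin n) := ob.mulAction Γ
  refine ⟨instFin, fun i => ob i, fun γ i => ?_, Subtype.val_injective.comp ob.injective, ?_, ?_⟩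
  · change ((ob (ob.symm (γ • ob i)) : CharT d)) = _
    rw [Equiv.apply_symm_apply]
    rfl
  · refine ⟨fun i j => ?_⟩
    obtain ⟨γ, hγ⟩ := exists_smul_eq Γ (ob i) (ob j)
    exact ⟨γ, by rw [Equiv.smul_def, hγ, Equiv.symm_apply_apply]⟩
  · exact (ob.surjective.range_comp Subtype.val).trans Subtype.range_coe

theorem statement11_general (d n : ℕ) {Γ : Type*} [Group Γ]
    (φ : Γ →* MulAut (Lat d)) (ξ : CharT d)
    (horb : (Set.range (fun γ : Γ => cact φ γ ξ)).Finite)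
    (hn : Nat.card ↥(Set.range (fun γ : Γ => cact φ γ ξ)) = n) :
    ∃ σ : (Lat d ⋊[φ] Γ) →* Matrix.unitaryGroup (Fin n) ℂ,
      IsIrred σ ∧
      -- the occurring characters of Λ are exactly the Γ-orbit of ξ
      spec φ σ = Set.range (fun γ : Γ => cact φ γ ξ) ∧
      -- indeed σ is (isomorphic to) the representation induced from the one-dimensional
      -- representation (a,γ) ↦ ξ(a) of Λ ⋊ Γ_ξ, i.e. with η the trivial character
      ∃ e : (Fin n → ℂ) ≃ₗ[ℂ] Ind1 φ ξ (1 : ↥(stab φ ξ) →* Circle),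
        ∀ (g : Lat d ⋊[φ] Γ) (v : Fin n → ℂ),
          e (Matrix.mulVec (σ g : Matrix (Fin n) (Fin n) ℂ) v)
            = (MonoidAlgebra.single g (1 : ℂ) : MonoidAlgebra ℂ (Lat d ⋊[φ] Γ)) • e v := by
  obtain ⟨_, χ, hχ, hinj, _, hrange⟩ := exists_fin_equivariant_of_orbit φ ξ horb hn
  obtain ⟨i₀, hi₀⟩ : ξ ∈ Set.range χ := hrange ▸ ⟨1, cact_one φ ξ⟩
  exact ⟨monomialRep φ hχ, isIrred_monomialRep hχ hinj, (spec_monomialRep hχ).trans hrange,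
    monomialEquivInduced hχ hinj hi₀, monomialEquivInduced_mulVec hχ hinj hi₀⟩

theorem statement11 (d n : ℕ) (hd : 1 ≤ d) {Γ : Type*} [Group Γ]
    (φ : Γ →* MulAut (Lat d)) (ξ : CharT d)
    (horb : (Set.range (fun γ : Γ => cact φ γ ξ)).Finite)
    (hn : Nat.card ↥(Set.range (fun γ : Γ => cact φ γ ξ)) = n) :
    ∃ σ : (Lat d ⋊[φ] Γ) →* Matrix.unitaryGroup (Fin n) ℂ,
      IsIrred σ ∧
      -- the occurring characters of Λ are exactly the Γ-orbit of ξ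
      spec φ σ = Set.range (fun γ : Γ => cact φ γ ξ) ∧
      -- indeed σ is (isomorphic to) the representation induced from the one-dimensional
      -- representation (a,γ) ↦ ξ(a) of Λ ⋊ Γ_ξ, i.e. with η the trivial character
      ∃ e : (Fin n → ℂ) ≃ₗ[ℂ] Ind1 φ ξ (1 : ↥(stab φ ξ) →* Circle),
        ∀ (g : Lat d ⋊[φ] Γ) (v : Fin n → ℂ),
          e (Matrix.mulVec (σ g : Matrix (Fin n) (Fin n) ℂ) v)
            = (MonoidAlgebra.single g (1 : ℂ) : MonoidAlgebra ℂ (Lat d ⋊[φ] Γ)) • e v :=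
  statement11_general d n φ ξ horb hn

end Statement11
end
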